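/- arXiv:1802.06673 — 2 statements merged into one kernel-verified Lean document; each statement's English description precedes it below -/
import Mathlib

section
/- Consider the Lorenz-gauged full Maxwell DAE system: (i) L_ε M_N S M_ε a + L_σ Φ + L_ε Φ' = 0, (ii) Cᵀ M_ν C a + M_σ(π + GΦ) + M_ε(π' + GΦ') = j_s, (iii) S M_ε π − L_ε Φ + q = 0, (iv) a' − π = 0. If L_ε and M_ε are invertible, then after exactly one differentiation of (iii) the system can be rewritten as an explicit ODE for (q, Φ, a, π); i.e. the system has differential index 1. -/
open Matrix

lemma hasDerivAt_mulVec_aux {N n : ℕ} (M : Matrix (Fin N) (Fin n) ℝ)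
    {f : ℝ → Fin n → ℝ} {f' : Fin n → ℝ} {t : ℝ} (hf : HasDerivAt f f' t) :
    HasDerivAt (fun s => M *ᵥ f s) (M *ᵥ f') t := by
  have := (LinearMap.toContinuousLinearMap M.mulVecLin).hasFDerivAt.comp_hasDerivAt t hf
  simpa [Function.comp_def] using this

/-- The Lorenz-gauged full Maxwell DAE has differential index 1: one
differentiation of the constraint (iii) yields explicit ODEs for all unknowns. -/
theorem lorenz_gauge_index_one
    {N n : ℕ} (S : Matrix (Fin N) (Fin n) ℝ) (C : Matrix (Fin n) (Fin n) ℝ)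
    (G : Matrix (Fin n) (Fin N) ℝ)
    (Mε Mσ Mν : Matrix (Fin n) (Fin n) ℝ)
    (Lε Lσ MN : Matrix (Fin N) (Fin N) ℝ)
    (hSC : S * Cᵀ = 0) (hG : G = -Sᵀ)
    (hLε : Lε = S * Mε * Sᵀ) (hLσ : Lσ = S * Mσ * Sᵀ)
    (hS : ∀ y : Fin N → ℝ, Sᵀ *ᵥ y = 0 → y = 0)
    (hMε : Mε.PosDef) (hMσ : Mσ.PosSemidef) (hMν : Mν.PosDef)
    (hLεinv : IsUnit Lε) (hMεinv : IsUnit Mε) (hMN : IsUnit MN)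
    (a π a' π' js : ℝ → (Fin n → ℝ))
    (q Φ q' Φ' : ℝ → (Fin N → ℝ))
    (ha : ∀ t, HasDerivAt a (a' t) t)
    (hπ : ∀ t, HasDerivAt π (π' t) t)
    (hq : ∀ t, HasDerivAt q (q' t) t)
    (hΦ : ∀ t, HasDerivAt Φ (Φ' t) t)
    -- (i) Lorenz gauge
    (hGauge : ∀ t, (Lε * MN * S * Mε) *ᵥ a t + Lσ *ᵥ Φ t + Lε *ᵥ Φ' t = 0)
    -- (ii) Ampère's law
    (hAmpere : ∀ t, (Cᵀ * Mν * C) *ᵥ a t + Mσ *ᵥ (π t + G *ᵥ Φ t)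
        + Mε *ᵥ (π' t + G *ᵥ Φ' t) = js t)
    -- (iii) Gauss' law
    (hGauss : ∀ t, (S * Mε) *ᵥ π t - Lε *ᵥ Φ t + q t = 0)
    -- (iv)
    (hiv : ∀ t, a' t - π t = 0) :
    ∀ t : ℝ,
      Φ' t = -((MN * S * Mε) *ᵥ a t) - (Lε⁻¹ * Lσ) *ᵥ Φ t ∧
      a' t = π t ∧
      π' t = Mε⁻¹ *ᵥ (js t - (Cᵀ * Mν * C) *ᵥ a t - Mσ *ᵥ (π t + G *ᵥ Φ t)
        - (Mε * G) *ᵥ Φ' t) ∧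
      q' t = (S * Mσ) *ᵥ π t - Lσ *ᵥ Φ t - S *ᵥ js t := by
  have hLεdet : IsUnit Lε.det := (Matrix.isUnit_iff_isUnit_det _).mp hLεinv
  have hMεdet : IsUnit Mε.det := (Matrix.isUnit_iff_isUnit_det _).mp hMεinv
  have hLεL : Lε⁻¹ * Lε = 1 := Matrix.nonsing_inv_mul _ hLεdet
  have hMεL : Mε⁻¹ * Mε = 1 := Matrix.nonsing_inv_mul _ hMεdet
  have hMεR : Mε * Mε⁻¹ = 1 := Matrix.mul_nonsing_inv _ hMεdet
  intro t
  -- Φ'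
  have hPhi : Φ' t = -((MN * S * Mε) *ᵥ a t) - (Lε⁻¹ * Lσ) *ᵥ Φ t := by
    have h2 := congrArg (fun v => Lε⁻¹ *ᵥ v) (hGauge t)
    simp only [mulVec_add, mulVec_mulVec, mulVec_zero] at h2
    have e1 : Lε⁻¹ * (Lε * MN * S * Mε) = MN * S * Mε := by
      rw [← Matrix.mul_assoc, ← Matrix.mul_assoc, ← Matrix.mul_assoc, hLεL,
        Matrix.one_mul]
    rw [e1, hLεL, Matrix.one_mulVec] at h2
    linear_combination h2
  -- π'
  have hMG : Mε⁻¹ *ᵥ ((Mε * G) *ᵥ Φ' t) = G *ᵥ Φ' t := by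
    rw [mulVec_mulVec, ← Matrix.mul_assoc, hMεL, Matrix.one_mul]
  have key : Mε⁻¹ *ᵥ (Mε *ᵥ (π' t + G *ᵥ Φ' t)) = π' t + G *ᵥ Φ' t := by
    rw [mulVec_mulVec, hMεL, Matrix.one_mulVec]
  have hPi : π' t = Mε⁻¹ *ᵥ (js t - (Cᵀ * Mν * C) *ᵥ a t - Mσ *ᵥ (π t + G *ᵥ Φ t)
      - (Mε * G) *ᵥ Φ' t) := by
    have h2 : Mε *ᵥ (π' t + G *ᵥ Φ' t)
        = js t - (Cᵀ * Mν * C) *ᵥ a t - Mσ *ᵥ (π t + G *ᵥ Φ t) := by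
      linear_combination (hAmpere t)
    have h3 : π' t + G *ᵥ Φ' t
        = Mε⁻¹ *ᵥ (js t - (Cᵀ * Mν * C) *ᵥ a t - Mσ *ᵥ (π t + G *ᵥ Φ t)) := by
      rw [← h2]; exact key.symm
    rw [Matrix.mulVec_sub, hMG, ← h3]
    abel
  refine ⟨hPhi, sub_eq_zero.mp (hiv t), hPi, ?_⟩
  -- q' : differentiate Gauss' law
  have dπ : HasDerivAt (fun s => (S * Mε) *ᵥ π s) ((S * Mε) *ᵥ π' t) t :=
    hasDerivAt_mulVec_aux _ (hπ t)
  have dΦ : HasDerivAt (fun s => Lε *ᵥ Φ s) (Lε *ᵥ Φ' t) t :=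
    hasDerivAt_mulVec_aux _ (hΦ t)
  have dF : HasDerivAt (fun s => (S * Mε) *ᵥ π s - Lε *ᵥ Φ s + q s)
      ((S * Mε) *ᵥ π' t - Lε *ᵥ Φ' t + q' t) t := (dπ.sub dΦ).add (hq t)
  have dF0 : HasDerivAt (fun s => (S * Mε) *ᵥ π s - Lε *ᵥ Φ s + q s)
      (0 : Fin N → ℝ) t := by
    have hE : (fun s => (S * Mε) *ᵥ π s - Lε *ᵥ Φ s + q s) = fun _ => (0 : Fin N → ℝ) :=
      funext hGauss
    rw [hE]; exact hasDerivAt_const t 0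
  have hzero : (S * Mε) *ᵥ π' t - Lε *ᵥ Φ' t + q' t = 0 := dF.unique dF0
  have hq' : q' t = Lε *ᵥ Φ' t - (S * Mε) *ᵥ π' t := by linear_combination hzero
  -- compute (S * Mε) *ᵥ π' t
  have hSπ' : (S * Mε) *ᵥ π' t
      = S *ᵥ js t - (S * Mσ) *ᵥ π t + Lσ *ᵥ Φ t + Lε *ᵥ Φ' t := by
    rw [hPi, mulVec_mulVec]
    have e : S * Mε * Mε⁻¹ = S := by rw [Matrix.mul_assoc, hMεR, Matrix.mul_one]
    rw [e]
    have e0 : S *ᵥ ((Cᵀ * Mν * C) *ᵥ a t) = 0 := by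
      rw [mulVec_mulVec]
      have h : S * (Cᵀ * Mν * C) = 0 := by
        rw [← Matrix.mul_assoc, ← Matrix.mul_assoc, hSC, Matrix.zero_mul,
          Matrix.zero_mul]
      rw [h, zero_mulVec]
    have e1 : S *ᵥ (Mσ *ᵥ (π t + G *ᵥ Φ t)) = (S * Mσ) *ᵥ π t - Lσ *ᵥ Φ t := by
      rw [mulVec_mulVec, Matrix.mulVec_add, mulVec_mulVec]
      have h : S * Mσ * G = -Lσ := by rw [hG, hLσ, Matrix.mul_neg]
      rw [h, neg_mulVec]
      abel
    have e2 : S *ᵥ ((Mε * G) *ᵥ Φ' t) = -(Lε *ᵥ Φ' t) := by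
      rw [mulVec_mulVec]
      have h : S * (Mε * G) = -Lε := by
        rw [hG, Matrix.mul_neg, Matrix.mul_neg, ← Matrix.mul_assoc, ← hLε]
      rw [h, neg_mulVec]
    rw [Matrix.mulVec_sub, Matrix.mulVec_sub, Matrix.mulVec_sub, e0, e1, e2]
    abel
  rw [hq', hSπ']
  abel
end

section
/- Let M_μ be SPD, S̃ full row rank, Z = M_μ − M_μ S̃ᵀ(S̃ M_μ S̃ᵀ)^{-1} S̃ M_μ, and let P be a matrix with full column rank such that im P ∩ im S̃ᵀ = {0}. Then Pᵀ Z P is symmetric positive definite. -/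
/-!
With `A = S M Sᵀ` (positive definite because `M` is and `Sᵀ` is injective), the matrix
`Q = 1 - Sᵀ A⁻¹ S M` is the `M`-orthogonal projection with kernel `im Sᵀ`, and the Schur
complement factors as `Z = M - M Sᵀ A⁻¹ S M = Qᵀ M Q`. Hence `Pᵀ Z P = (Q P)ᵀ M (Q P)`,
which is positive definite as soon as `Q P` is injective; and `Q P x = 0` puts `P x` in
`im P ∩ im Sᵀ = 0`, so `x = 0`.
-/

open Matrix

namespace Matrix

variable {R n ι : Type*} [Fintype n]

theorem mulVec_injective_iff_eq_zero [CommRing R] {A : Matrix ι n R} :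
    Function.Injective A.mulVec ↔ ∀ x, A *ᵥ x = 0 → x = 0 :=
  injective_iff_map_eq_zero A.mulVecLin

theorem PosDef.mul_mul_transpose_of_injective [Fintype ι] {M : Matrix n n ℝ}
    {S : Matrix ι n ℝ} (hM : M.PosDef) (hS : ∀ y, Sᵀ *ᵥ y = 0 → y = 0) :
    (S * M * Sᵀ).PosDef := by
  simpa only [conjTranspose_eq_transpose_of_trivial, transpose_transpose] using
    hM.conjTranspose_mul_mul_same (mulVec_injective_iff_eq_zero.mpr hS)

section projAlongRangeTranspose

variable [Fintype ι] [DecidableEq n] [DecidableEq ι] [CommRing R]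

noncomputable def projAlongRangeTranspose (M : Matrix n n R) (S : Matrix ι n R) :
    Matrix n n R :=
  1 - Sᵀ * (S * M * Sᵀ)⁻¹ * S * M

theorem sub_mul_inv_mul_eq_transpose_projAlongRangeTranspose {M : Matrix n n R}
    {S : Matrix ι n R} (hM : Mᵀ = M) (hA : IsUnit (S * M * Sᵀ).det) :
    M - M * Sᵀ * (S * M * Sᵀ)⁻¹ * S * M =
      (projAlongRangeTranspose M S)ᵀ * M * projAlongRangeTranspose M S := by
  rw [projAlongRangeTranspose]
  set A := S * M * Sᵀ with hAdef
  have hAT : Aᵀ = A := by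
    simp only [hAdef, transpose_mul, transpose_transpose, hM, Matrix.mul_assoc]
  have hAinvT : A⁻¹ᵀ = A⁻¹ := by rw [transpose_nonsing_inv, hAT]
  have hidem : M * Sᵀ * A⁻¹ * S * M * (Sᵀ * A⁻¹ * S * M) = M * Sᵀ * A⁻¹ * S * M :=
    calc M * Sᵀ * A⁻¹ * S * M * (Sᵀ * A⁻¹ * S * M)
        = M * Sᵀ * (A⁻¹ * A * A⁻¹) * S * M := by simp only [hAdef, Matrix.mul_assoc]
      _ = M * Sᵀ * A⁻¹ * S * M := by rw [nonsing_inv_mul A hA, Matrix.one_mul]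
  simp only [transpose_sub, transpose_one, transpose_mul, transpose_transpose, hM, hAinvT,
    Matrix.mul_sub, Matrix.sub_mul, Matrix.mul_one, Matrix.one_mul]
  simp only [Matrix.mul_assoc] at hidem ⊢
  rw [hidem]
  abel

theorem exists_eq_transpose_mulVec_of_projAlongRangeTranspose_mulVec_eq_zero
    {M : Matrix n n R} {S : Matrix ι n R} {v : n → R}
    (hv : projAlongRangeTranspose M S *ᵥ v = 0) : ∃ y, v = Sᵀ *ᵥ y := by
  refine ⟨((S * M * Sᵀ)⁻¹ * S * M) *ᵥ v, ?_⟩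
  rw [projAlongRangeTranspose, sub_mulVec, one_mulVec, sub_eq_zero] at hv
  rw [mulVec_mulVec]
  simpa only [Matrix.mul_assoc] using hv

end projAlongRangeTranspose

end Matrix

theorem cotree_projected_schur_posDef
    {N n m : ℕ} (Mμ : Matrix (Fin n) (Fin n) ℝ)
    (St : Matrix (Fin N) (Fin n) ℝ) (P : Matrix (Fin n) (Fin m) ℝ)
    (hMμ : Mμ.PosDef)
    (hfull : ∀ y : Fin N → ℝ, Stᵀ *ᵥ y = 0 → y = 0)
    (hP : ∀ x : Fin m → ℝ, P *ᵥ x = 0 → x = 0)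
    (hdisjoint : ∀ v : Fin n → ℝ, (∃ x, v = P *ᵥ x) → (∃ y, v = Stᵀ *ᵥ y) → v = 0) :
    (Pᵀ * (Mμ - Mμ * Stᵀ * (St * Mμ * Stᵀ)⁻¹ * St * Mμ) * P).PosDef := by
  set Q := projAlongRangeTranspose Mμ St
  have hMT : Mμᵀ = Mμ := by
    simpa only [conjTranspose_eq_transpose_of_trivial] using hMμ.isHermitian.eq
  have hA : IsUnit (St * Mμ * Stᵀ).det :=
    (isUnit_iff_isUnit_det _).mp (hMμ.mul_mul_transpose_of_injective hfull).isUnit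
  have hQP : Function.Injective (Q * P).mulVec := by
    refine mulVec_injective_iff_eq_zero.mpr fun x hx => hP x ?_
    rw [← mulVec_mulVec] at hx
    exact hdisjoint _ ⟨x, rfl⟩
      (exists_eq_transpose_mulVec_of_projAlongRangeTranspose_mulVec_eq_zero hx)
  rw [sub_mul_inv_mul_eq_transpose_projAlongRangeTranspose hMT hA]
  simpa only [conjTranspose_eq_transpose_of_trivial, transpose_mul, Matrix.mul_assoc] using
    hMμ.conjTranspose_mul_mul_same hQP
end
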